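/- Suppose g solves the metric-matching PDE, and assume that for every t ∈ [0,1), ∫₀^∞ x·g(x,t) dx = 1 and ∫₀^∞ g(x,t) dx = 1 − t. Define z(t) = ∫₀^∞ (x²/4)·g(x,t) dx and assume z is differentiable on [0,1) with z'(t) = ∫₀^∞ (x²/4)·(∂g/∂t)(x,t) dx (differentiation under the integral sign is valid). Then for every t ∈ [0,1), z(t) = 1/(2(1−t)²), and consequently ∫₀^t z(s) ds = (1/2)·(1/(1−t) − 1). -/

import Mathlib

open MeasureTheory

/-- The right-hand side of the metric-matching PDE. -/
noncomputable def metricRHS (g : ℝ → ℝ → ℝ) (x t : ℝ) : ℝ :=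
  -(x + 1 / (1 - t)) * g x t
    + (1 / (1 - t)) * ∫ x' in (0 : ℝ)..x, x' * g x' t * g (x - x') t

/-- `g` solves the metric-matching PDE. -/
def SolvesMetricPDE (g : ℝ → ℝ → ℝ) : Prop :=
  Measurable (Function.uncurry g) ∧
  (∀ x t, 0 ≤ g x t) ∧
  (∀ x t, x < 0 → g x t = 0) ∧
  (∀ t ∈ Set.Ico (0 : ℝ) 1,
    IntegrableOn (fun x => g x t) (Set.Ioi 0) ∧
    IntegrableOn (fun x => x * g x t) (Set.Ioi 0) ∧
    IntegrableOn (fun x => x ^ 2 * g x t) (Set.Ioi 0) ∧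
    IntegrableOn (fun x => x ^ 3 * g x t) (Set.Ioi 0)) ∧
  (∀ x, 0 ≤ x → g x 0 = Real.exp (-x)) ∧
  (∀ x, 0 ≤ x → ∀ t ∈ Set.Ico (0 : ℝ) 1,
    HasDerivWithinAt (fun s => g x s) (metricRHS g x t) (Set.Ico 0 1) t)

open Set ENNReal

lemma aux_ae_ind {f : ℝ → ℝ} (hneg : ∀ x, x < 0 → f x = 0) :
    f =ᵐ[volume] (Set.Ioi (0:ℝ)).indicator f := by
  have h0 : ∀ᵐ x : ℝ, x ≠ 0 := by
    rw [ae_iff]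
    have : {x : ℝ | ¬ x ≠ 0} = {0} := by ext x; simp
    rw [this]; exact measure_singleton 0
  filter_upwards [h0] with x hx
  by_cases hxp : 0 < x
  · rw [Set.indicator_of_mem (Set.mem_Ioi.mpr hxp)]
  · have hlt : x < 0 := lt_of_le_of_ne (not_lt.mp hxp) hx
    rw [Set.indicator_of_notMem (by simpa using hxp), hneg x hlt]

lemma aux_integrable {f : ℝ → ℝ} (hneg : ∀ x, x < 0 → f x = 0) :
    Integrable f ↔ IntegrableOn f (Set.Ioi 0) := by
  rw [integrable_congr (aux_ae_ind hneg), integrable_indicator_iff measurableSet_Ioi]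

lemma aux_integral {f : ℝ → ℝ} (hneg : ∀ x, x < 0 → f x = 0) :
    (∫ x, f x) = ∫ x in Set.Ioi (0:ℝ), f x := by
  rw [integral_congr_ae (aux_ae_ind hneg), integral_indicator measurableSet_Ioi]

lemma conv_moment (G : ℝ → ℝ) (hm : Measurable G) (h0 : ∀ x, 0 ≤ G x)
    (hneg : ∀ x, x < 0 → G x = 0)
    (hi0 : IntegrableOn G (Set.Ioi 0)) (hi1 : IntegrableOn (fun x => x * G x) (Set.Ioi 0))
    (hi2 : IntegrableOn (fun x => x ^ 2 * G x) (Set.Ioi 0))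
    (hi3 : IntegrableOn (fun x => x ^ 3 * G x) (Set.Ioi 0)) :
    IntegrableOn (fun x => x ^ 2 * ∫ u in (0:ℝ)..x, u * G u * G (x - u)) (Set.Ioi 0) ∧
    (∫ x in Set.Ioi (0:ℝ), x ^ 2 * ∫ u in (0:ℝ)..x, u * G u * G (x - u)) =
      (∫ x in Set.Ioi (0:ℝ), x ^ 3 * G x) * (∫ x in Set.Ioi (0:ℝ), G x)
      + 3 * ((∫ x in Set.Ioi (0:ℝ), x ^ 2 * G x) * (∫ x in Set.Ioi (0:ℝ), x * G x)) := by
  set M0 : ℝ := ∫ x in Set.Ioi (0:ℝ), G x with hM0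
  set M1 : ℝ := ∫ x in Set.Ioi (0:ℝ), x * G x with hM1
  set M2 : ℝ := ∫ x in Set.Ioi (0:ℝ), x ^ 2 * G x with hM2
  set M3 : ℝ := ∫ x in Set.Ioi (0:ℝ), x ^ 3 * G x with hM3
  have hM0n : 0 ≤ M0 := setIntegral_nonneg measurableSet_Ioi fun x _ => h0 x
  have hM1n : 0 ≤ M1 := setIntegral_nonneg measurableSet_Ioi fun x hx =>
    mul_nonneg (le_of_lt hx) (h0 x)
  have hM2n : 0 ≤ M2 := setIntegral_nonneg measurableSet_Ioi fun x hx =>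
    mul_nonneg (by positivity) (h0 x)
  have hM3n : 0 ≤ M3 := setIntegral_nonneg measurableSet_Ioi fun x hx =>
    mul_nonneg (pow_nonneg (le_of_lt hx) 3) (h0 x)
  -- full-line versions
  have hn0 : ∀ x : ℝ, x < 0 → G x = 0 := hneg
  have hn1 : ∀ x : ℝ, x < 0 → x * G x = 0 := fun x hx => by rw [hneg x hx, mul_zero]
  have hn2 : ∀ x : ℝ, x < 0 → x ^ 2 * G x = 0 := fun x hx => by rw [hneg x hx, mul_zero]
  have hn3 : ∀ x : ℝ, x < 0 → x ^ 3 * G x = 0 := fun x hx => by rw [hneg x hx, mul_zero]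
  have J0 : Integrable G := (aux_integrable hn0).mpr hi0
  have J1 : Integrable (fun x : ℝ => x * G x) := (aux_integrable hn1).mpr hi1
  have J2 : Integrable (fun x : ℝ => x ^ 2 * G x) := (aux_integrable hn2).mpr hi2
  have J3 : Integrable (fun x : ℝ => x ^ 3 * G x) := (aux_integrable hn3).mpr hi3
  have E0 : (∫ x : ℝ, G x) = M0 := aux_integral hn0
  have E1 : (∫ x : ℝ, x * G x) = M1 := aux_integral hn1
  have E2 : (∫ x : ℝ, x ^ 2 * G x) = M2 := aux_integral hn2
  have E3 : (∫ x : ℝ, x ^ 3 * G x) = M3 := aux_integral hn3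
  have hug : ∀ u : ℝ, 0 ≤ u * G u := by
    intro u
    rcases le_or_gt 0 u with h | h
    · exact mul_nonneg h (h0 u)
    · rw [hneg u h, mul_zero]
  have hug0 : ∀ u : ℝ, u ≤ 0 → u * G u = 0 := by
    intro u hu
    rcases lt_or_eq_of_le hu with h | h
    · rw [hneg u h, mul_zero]
    · rw [h, zero_mul]
  set P : ℝ → ℝ := fun u => u ^ 2 * M0 + 2 * u * M1 + M2 with hP
  -- inner integral in v
  have IB : ∀ u : ℝ, Integrable (fun v => (u + v) ^ 2 * G v) := by
    intro u
    have he : (fun v : ℝ => (u + v) ^ 2 * G v)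
        = fun v => u ^ 2 * G v + 2 * u * (v * G v) + v ^ 2 * G v := by
      funext v; ring
    rw [he]
    exact ((J0.const_mul _).add (J1.const_mul _)).add J2
  have EB : ∀ u : ℝ, (∫ v : ℝ, (u + v) ^ 2 * G v) = P u := by
    intro u
    have he : (fun v : ℝ => (u + v) ^ 2 * G v)
        = fun v => u ^ 2 * G v + 2 * u * (v * G v) + v ^ 2 * G v := by
      funext v; ring
    have ha : Integrable (fun v : ℝ => u ^ 2 * G v) := J0.const_mul _
    have hb : Integrable (fun v : ℝ => 2 * u * (v * G v)) := J1.const_mul _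
    have hab : Integrable (fun v : ℝ => u ^ 2 * G v + 2 * u * (v * G v)) := ha.add hb
    rw [he, integral_add hab J2, integral_add ha hb,
      integral_const_mul, integral_const_mul, E0, E1, E2]
  set K : ℝ≥0∞ := ∫⁻ u : ℝ, ∫⁻ v : ℝ, ENNReal.ofReal ((u * G u) * ((u + v) ^ 2 * G v)) with hK
  set V : ℝ := M3 * M0 + 2 * (M2 * M1) + M1 * M2 with hV
  have hVnonneg : 0 ≤ V := by positivity
  -- Step A
  have stepA : K = ENNReal.ofReal V := by
    have hKA : ∀ u : ℝ,
        (∫⁻ v : ℝ, ENNReal.ofReal ((u * G u) * ((u + v) ^ 2 * G v)))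
          = ENNReal.ofReal ((u * G u) * P u) := by
      intro u
      have hmeas : Measurable fun v : ℝ => ENNReal.ofReal ((u + v) ^ 2 * G v) :=
        (((measurable_const.add measurable_id).pow_const 2).mul hm).ennreal_ofReal
      calc (∫⁻ v : ℝ, ENNReal.ofReal ((u * G u) * ((u + v) ^ 2 * G v)))
          = ∫⁻ v : ℝ, ENNReal.ofReal (u * G u) * ENNReal.ofReal ((u + v) ^ 2 * G v) := by
            exact lintegral_congr fun v => ENNReal.ofReal_mul (hug u)
        _ = ENNReal.ofReal (u * G u) * ∫⁻ v : ℝ, ENNReal.ofReal ((u + v) ^ 2 * G v) :=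
            lintegral_const_mul _ hmeas
        _ = ENNReal.ofReal (u * G u) * ENNReal.ofReal (∫ v : ℝ, (u + v) ^ 2 * G v) := by
            rw [ofReal_integral_eq_lintegral_ofReal (IB u)
              (Filter.Eventually.of_forall fun v => mul_nonneg (sq_nonneg _) (h0 v))]
        _ = ENNReal.ofReal ((u * G u) * P u) := by
            rw [EB u, ← ENNReal.ofReal_mul (hug u)]
    have hInt : Integrable (fun u : ℝ => (u * G u) * P u) := by
      have he : (fun u : ℝ => (u * G u) * P u)
          = fun u => M0 * (u ^ 3 * G u) + 2 * M1 * (u ^ 2 * G u) + M2 * (u * G u) := by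
        funext u; simp only [hP]; ring
      rw [he]
      have ha : Integrable (fun u : ℝ => M0 * (u ^ 3 * G u)) := J3.const_mul _
      have hb : Integrable (fun u : ℝ => 2 * M1 * (u ^ 2 * G u)) := J2.const_mul _
      exact (ha.add hb).add (J1.const_mul _)
    have hEq : (∫ u : ℝ, (u * G u) * P u) = V := by
      have he : (fun u : ℝ => (u * G u) * P u)
          = fun u => M0 * (u ^ 3 * G u) + 2 * M1 * (u ^ 2 * G u) + M2 * (u * G u) := by
        funext u; simp only [hP]; ring
      have ha : Integrable (fun u : ℝ => M0 * (u ^ 3 * G u)) := J3.const_mul _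
      have hb : Integrable (fun u : ℝ => 2 * M1 * (u ^ 2 * G u)) := J2.const_mul _
      have hab : Integrable (fun u : ℝ => M0 * (u ^ 3 * G u) + 2 * M1 * (u ^ 2 * G u)) :=
        ha.add hb
      rw [he, integral_add hab (J1.const_mul _), integral_add ha hb,
        integral_const_mul, integral_const_mul, integral_const_mul, E3, E2, E1, hV]
      ring
    have hnn : ∀ u : ℝ, 0 ≤ (u * G u) * P u := by
      intro u
      rcases le_or_gt u 0 with h | h
      · rw [hug0 u h, zero_mul]
      · refine mul_nonneg (hug u) ?_
        simp only [hP]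
        have : 0 ≤ u ^ 2 * M0 := by positivity
        have : 0 ≤ 2 * u * M1 := by positivity
        positivity
    calc K = ∫⁻ u : ℝ, ENNReal.ofReal ((u * G u) * P u) := lintegral_congr hKA
      _ = ENNReal.ofReal (∫ u : ℝ, (u * G u) * P u) :=
          (ofReal_integral_eq_lintegral_ofReal hInt
            (Filter.Eventually.of_forall hnn)).symm
      _ = ENNReal.ofReal V := by rw [hEq]
  -- Step B: translation + Tonelli swap
  set F2 : ℝ → ℝ → ℝ≥0∞ := fun u x => ENNReal.ofReal ((u * G u) * (x ^ 2 * G (x - u)))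
    with hF2
  have hF2meas : Measurable fun p : ℝ × ℝ => F2 p.1 p.2 :=
    ((measurable_fst.mul (hm.comp measurable_fst)).mul
      ((measurable_snd.pow_const 2).mul
        (hm.comp (measurable_snd.sub measurable_fst)))).ennreal_ofReal
  have hF2meas' : Measurable fun p : ℝ × ℝ => F2 p.2 p.1 :=
    ((measurable_snd.mul (hm.comp measurable_snd)).mul
      ((measurable_fst.pow_const 2).mul
        (hm.comp (measurable_fst.sub measurable_snd)))).ennreal_ofReal
  set Jf : ℝ → ℝ≥0∞ := fun x => ∫⁻ u : ℝ, F2 u x with hJf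
  have hJfmeas : Measurable Jf := Measurable.lintegral_prod_right hF2meas'
  have b1 : ∀ u : ℝ, (∫⁻ x : ℝ, F2 u x)
      = ∫⁻ v : ℝ, ENNReal.ofReal ((u * G u) * ((u + v) ^ 2 * G v)) := by
    intro u
    calc (∫⁻ x : ℝ, F2 u x)
        = ∫⁻ x : ℝ, (fun v => ENNReal.ofReal ((u * G u) * ((u + v) ^ 2 * G v))) (x - u) := by
          refine lintegral_congr fun x => ?_
          show ENNReal.ofReal ((u * G u) * (x ^ 2 * G (x - u)))
            = ENNReal.ofReal ((u * G u) * ((u + (x - u)) ^ 2 * G (x - u)))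
          have h2 : u + (x - u) = x := by ring
          rw [h2]
      _ = ∫⁻ v : ℝ, ENNReal.ofReal ((u * G u) * ((u + v) ^ 2 * G v)) :=
          lintegral_sub_right_eq_self (fun v => ENNReal.ofReal ((u * G u) * ((u + v) ^ 2 * G v))) u
  have stepB : K = ∫⁻ x : ℝ, Jf x := by
    rw [hK]
    rw [lintegral_congr fun u => (b1 u).symm]
    exact lintegral_lintegral_swap hF2meas.aemeasurable
  have hJf_zero : ∀ x : ℝ, x ≤ 0 → Jf x = 0 := by
    intro x hx
    have hz : ∀ u : ℝ, F2 u x = 0 := by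
      intro u
      rcases le_or_gt u 0 with h | h
      · simp [hF2, hug0 u h]
      · have hlt : x - u < 0 := by linarith
        simp [hF2, hneg _ hlt]
    calc Jf x = ∫⁻ u : ℝ, 0 := lintegral_congr hz
      _ = 0 := lintegral_zero
  have stepB' : K = ∫⁻ x in Set.Ioi (0:ℝ), Jf x := by
    rw [stepB, ← lintegral_indicator measurableSet_Ioi]
    refine lintegral_congr fun x => ?_
    by_cases hx : 0 < x
    · rw [Set.indicator_of_mem (Set.mem_Ioi.mpr hx)]
    · rw [Set.indicator_of_notMem (by simpa using hx), hJf_zero x (not_lt.mp hx)]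
  -- Step C: identification with the real integral
  set L : ℝ → ℝ≥0∞ := fun x => ∫⁻ u in Set.Ioc 0 x, ENNReal.ofReal (u * G u * G (x - u))
    with hL
  have c1 : ∀ x : ℝ, Jf x = ENNReal.ofReal (x ^ 2) * L x := by
    intro x
    have hmeasx : Measurable fun u : ℝ => ENNReal.ofReal (u * G u * G (x - u)) :=
      (((measurable_id.mul hm).mul
        (hm.comp (measurable_const.sub measurable_id)))).ennreal_ofReal
    have hpt : ∀ u : ℝ, F2 u x
        = ENNReal.ofReal (x ^ 2) * ENNReal.ofReal (u * G u * G (x - u)) := by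
      intro u
      rw [← ENNReal.ofReal_mul (sq_nonneg x)]
      show ENNReal.ofReal ((u * G u) * (x ^ 2 * G (x - u))) = _
      congr 1; ring
    calc Jf x = ∫⁻ u : ℝ, ENNReal.ofReal (x ^ 2) * ENNReal.ofReal (u * G u * G (x - u)) :=
          lintegral_congr hpt
      _ = ENNReal.ofReal (x ^ 2) * ∫⁻ u : ℝ, ENNReal.ofReal (u * G u * G (x - u)) :=
          lintegral_const_mul _ hmeasx
      _ = ENNReal.ofReal (x ^ 2) * L x := by
          congr 1
          show _ = ∫⁻ u : ℝ in Set.Ioc 0 x, ENNReal.ofReal (u * G u * G (x - u))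
          rw [← lintegral_indicator measurableSet_Ioc]
          refine lintegral_congr fun u => ?_
          by_cases hu : u ∈ Set.Ioc 0 x
          · rw [Set.indicator_of_mem hu]
          · rw [Set.indicator_of_notMem hu]
            rcases le_or_gt u 0 with h | h
            · simp [hug0 u h]
            · have hxu : ¬ u ≤ x := fun hle => hu ⟨h, hle⟩
              have hlt : x - u < 0 := by push_neg at hxu; linarith
              simp [hneg _ hlt]
  have hfin : K ≠ ⊤ := by rw [stepA]; exact ENNReal.ofReal_ne_top
  have c2 : ∀ᵐ x ∂(volume.restrict (Set.Ioi 0)), Jf x < ⊤ :=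
    ae_lt_top hJfmeas (by rw [← stepB']; exact hfin)
  set q : ℝ → ℝ := fun x => x ^ 2 * ∫ u in (0:ℝ)..x, u * G u * G (x - u) with hq
  have hnnconv : ∀ x u : ℝ, 0 ≤ u * G u * G (x - u) := fun x u =>
    mul_nonneg (hug u) (h0 _)
  have c3 : ∀ᵐ x ∂(volume.restrict (Set.Ioi 0)),
      0 ≤ q x ∧ ENNReal.ofReal (q x) = Jf x := by
    filter_upwards [c2, ae_restrict_mem measurableSet_Ioi] with x hfinx hx
    have hx0 : (0:ℝ) < x := hx
    have hLfin : L x ≠ ⊤ := by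
      intro hLt
      have hne : ENNReal.ofReal (x ^ 2) ≠ 0 := by
        simp only [ne_eq, ENNReal.ofReal_eq_zero, not_le]
        exact pow_pos hx0 2
      rw [c1 x, hLt, ENNReal.mul_top hne] at hfinx
      exact (lt_irrefl _ hfinx)
    have hmeasx : Measurable fun u : ℝ => u * G u * G (x - u) :=
      (measurable_id.mul hm).mul (hm.comp (measurable_const.sub measurable_id))
    have hint : IntegrableOn (fun u => u * G u * G (x - u)) (Set.Ioc 0 x) := by
      refine ⟨hmeasx.aestronglyMeasurable, ?_⟩
      rw [hasFiniteIntegral_iff_ofReal (Filter.Eventually.of_forall (hnnconv x))]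
      exact lt_of_le_of_ne le_top hLfin
    have hconv : (∫ u in (0:ℝ)..x, u * G u * G (x - u))
        = ∫ u in Set.Ioc 0 x, u * G u * G (x - u) :=
      intervalIntegral.integral_of_le hx0.le
    have hcnn : 0 ≤ ∫ u in Set.Ioc 0 x, u * G u * G (x - u) :=
      setIntegral_nonneg measurableSet_Ioc fun u _ => hnnconv x u
    have hL' : ENNReal.ofReal (∫ u in Set.Ioc 0 x, u * G u * G (x - u)) = L x :=
      ofReal_integral_eq_lintegral_ofReal hint
        (Filter.Eventually.of_forall (hnnconv x))
    constructor
    · show 0 ≤ x ^ 2 * ∫ u in (0:ℝ)..x, u * G u * G (x - u)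
      rw [hconv]
      exact mul_nonneg (sq_nonneg x) hcnn
    · calc ENNReal.ofReal (q x)
          = ENNReal.ofReal (x ^ 2)
            * ENNReal.ofReal (∫ u in Set.Ioc 0 x, u * G u * G (x - u)) := by
            show ENNReal.ofReal (x ^ 2 * ∫ u in (0:ℝ)..x, u * G u * G (x - u)) = _
            rw [hconv, ENNReal.ofReal_mul (sq_nonneg x)]
        _ = ENNReal.ofReal (x ^ 2) * L x := by rw [hL']
        _ = Jf x := (c1 x).symm
  have hq_nonneg : 0 ≤ᵐ[volume.restrict (Set.Ioi 0)] q := c3.mono fun x h => h.1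
  have hq_eqJ : q =ᵐ[volume.restrict (Set.Ioi 0)] fun x => (Jf x).toReal := by
    filter_upwards [c3] with x h
    rw [← h.2, ENNReal.toReal_ofReal h.1]
  have hq_meas : AEStronglyMeasurable q (volume.restrict (Set.Ioi 0)) :=
    (hJfmeas.ennreal_toReal.aestronglyMeasurable).congr hq_eqJ.symm
  have hlint : (∫⁻ x in Set.Ioi (0:ℝ), ENNReal.ofReal (q x)) = K := by
    rw [lintegral_congr_ae (c3.mono fun x h => h.2), ← stepB']
  constructor
  · refine ⟨hq_meas, ?_⟩
    rw [hasFiniteIntegral_iff_ofReal hq_nonneg]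
    show (∫⁻ x in Set.Ioi (0:ℝ), ENNReal.ofReal (q x)) < ⊤
    rw [hlint]
    exact lt_of_le_of_ne le_top hfin
  · show (∫ x in Set.Ioi (0:ℝ), q x) = M3 * M0 + 3 * (M2 * M1)
    rw [integral_eq_lintegral_of_nonneg_ae hq_nonneg hq_meas]
    show (∫⁻ x in Set.Ioi (0:ℝ), ENNReal.ofReal (q x)).toReal = _
    rw [hlint, stepA, ENNReal.toReal_ofReal hVnonneg, hV]
    ring

/-- If `g` solves the metric-matching PDE, with `∫₀^∞ x·g(x,t) dx = 1` and
`∫₀^∞ g(x,t) dx = 1 − t`, and differentiation under the integral sign is valid for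
`z(t) = ∫₀^∞ (x²/4)·g(x,t) dx`, then `z(t) = 1/(2(1−t)²)` and
`∫₀^t z(s) ds = (1/2)(1/(1−t) − 1)`. -/
theorem stmt15 (g : ℝ → ℝ → ℝ) (hg : SolvesMetricPDE g)
    (h1 : ∀ t ∈ Set.Ico (0 : ℝ) 1, (∫ x in Set.Ioi (0 : ℝ), x * g x t) = 1)
    (h2 : ∀ t ∈ Set.Ico (0 : ℝ) 1, (∫ x in Set.Ioi (0 : ℝ), g x t) = 1 - t)
    (hz : ∀ t ∈ Set.Ico (0 : ℝ) 1,
      HasDerivWithinAt (fun s => ∫ x in Set.Ioi (0 : ℝ), x ^ 2 / 4 * g x s)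
        (∫ x in Set.Ioi (0 : ℝ), x ^ 2 / 4 * metricRHS g x t) (Set.Ico 0 1) t) :
    ∀ t ∈ Set.Ico (0 : ℝ) 1,
      (∫ x in Set.Ioi (0 : ℝ), x ^ 2 / 4 * g x t) = 1 / (2 * (1 - t) ^ 2) ∧
      (∫ s in (0 : ℝ)..t, ∫ x in Set.Ioi (0 : ℝ), x ^ 2 / 4 * g x s) =
        (1 / 2) * (1 / (1 - t) - 1) := by
  obtain ⟨hmeas, hpos, hzero, hints, hinit, hpde⟩ := hg
  set z : ℝ → ℝ := fun s => ∫ x in Set.Ioi (0:ℝ), x ^ 2 / 4 * g x s with hzdef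
  have hGmeas : ∀ t : ℝ, Measurable fun x => g x t := fun t =>
    hmeas.comp (measurable_id.prodMk measurable_const)
  -- value of the derivative
  have key : ∀ t ∈ Set.Ico (0:ℝ) 1,
      (∫ x in Set.Ioi (0:ℝ), x ^ 2 / 4 * metricRHS g x t) = 2 / (1 - t) * z t := by
    intro t ht
    obtain ⟨ht0, ht1⟩ := ht
    have h1t : (0:ℝ) < 1 - t := by linarith
    obtain ⟨hi0, hi1, hi2, hi3⟩ := hints t ⟨ht0, ht1⟩
    obtain ⟨hqint, hqval⟩ := conv_moment (fun x => g x t) (hGmeas t) (fun x => hpos x t)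
      (fun x hx => hzero x t hx) hi0 hi1 hi2 hi3
    have hpt : ∀ x : ℝ, x ^ 2 / 4 * metricRHS g x t
        = (-(1/4) * (x ^ 3 * g x t) + (-(1/(1-t)/4)) * (x ^ 2 * g x t))
          + (1/(1-t)/4) * (x ^ 2 * ∫ u in (0:ℝ)..x, u * g u t * g (x - u) t) := by
      intro x
      simp only [metricRHS]
      ring
    have hA : IntegrableOn (fun x => -(1/4) * (x ^ 3 * g x t)
        + (-(1/(1-t)/4)) * (x ^ 2 * g x t)) (Set.Ioi 0) :=
      (hi3.const_mul _).add (hi2.const_mul _)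
    have hB : IntegrableOn (fun x =>
        (1/(1-t)/4) * (x ^ 2 * ∫ u in (0:ℝ)..x, u * g u t * g (x - u) t)) (Set.Ioi 0) :=
      hqint.const_mul _
    have hzM : z t = 1/4 * ∫ x in Set.Ioi (0:ℝ), x ^ 2 * g x t := by
      rw [hzdef, ← integral_const_mul]
      exact setIntegral_congr_fun measurableSet_Ioi fun x _ => by ring
    calc (∫ x in Set.Ioi (0:ℝ), x ^ 2 / 4 * metricRHS g x t)
        = ∫ x in Set.Ioi (0:ℝ), ((-(1/4) * (x ^ 3 * g x t) + (-(1/(1-t)/4)) * (x ^ 2 * g x t))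
            + (1/(1-t)/4) * (x ^ 2 * ∫ u in (0:ℝ)..x, u * g u t * g (x - u) t)) :=
          integral_congr_ae (Filter.Eventually.of_forall fun x => hpt x)
      _ = (∫ x in Set.Ioi (0:ℝ), (-(1/4) * (x ^ 3 * g x t) + (-(1/(1-t)/4)) * (x ^ 2 * g x t)))
            + ∫ x in Set.Ioi (0:ℝ),
              (1/(1-t)/4) * (x ^ 2 * ∫ u in (0:ℝ)..x, u * g u t * g (x - u) t) :=
          integral_add hA hB
      _ = ((-(1/4)) * (∫ x in Set.Ioi (0:ℝ), x ^ 3 * g x t)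
            + (-(1/(1-t)/4)) * (∫ x in Set.Ioi (0:ℝ), x ^ 2 * g x t))
            + (1/(1-t)/4) * ∫ x in Set.Ioi (0:ℝ),
                x ^ 2 * ∫ u in (0:ℝ)..x, u * g u t * g (x - u) t := by
          rw [integral_add (hi3.const_mul _) (hi2.const_mul _),
            integral_const_mul, integral_const_mul, integral_const_mul]
      _ = 2 / (1 - t) * z t := by
          rw [hqval, h1 t ⟨ht0, ht1⟩, h2 t ⟨ht0, ht1⟩, hzM]
          field_simp
          ring
  have hzd : ∀ t ∈ Set.Ico (0:ℝ) 1, HasDerivWithinAt z (2/(1-t) * z t) (Set.Ico 0 1) t := by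
    intro t ht
    have h := hz t ht
    rwa [key t ht] at h
  set w : ℝ → ℝ := fun s => (1 - s) ^ 2 * z s with hwdef
  have hwd : ∀ t ∈ Set.Ico (0:ℝ) 1, HasDerivWithinAt w 0 (Set.Ico 0 1) t := by
    intro t ht
    have h1t : (0:ℝ) < 1 - t := by linarith [ht.2]
    have ha : HasDerivWithinAt (fun s : ℝ => (1 - s) ^ 2) (-(2*(1-t))) (Set.Ico 0 1) t := by
      have h := (((hasDerivAt_id t).const_sub 1).pow 2).hasDerivWithinAt
        (s := Set.Ico (0:ℝ) 1)
      refine h.congr_deriv ?_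
      push_cast
      simp only [id_eq]
      ring
    have hprod := ha.mul (hzd t ht)
    refine hprod.congr_deriv ?_
    field_simp
    ring
  -- initial value
  have hz0 : z 0 = 1/2 := by
    have e1 : z 0 = ∫ x in Set.Ioi (0:ℝ), x ^ 2 / 4 * Real.exp (-x) := by
      rw [hzdef]
      exact setIntegral_congr_fun measurableSet_Ioi fun x hx => by
        rw [hinit x (le_of_lt hx)]
    have e3 := Real.integral_rpow_mul_exp_neg_mul_Ioi (a := (3:ℝ)) (r := 1)
      (by norm_num) (by norm_num)
    have hGamma : Real.Gamma 3 = 2 := by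
      rw [(by norm_num : (3:ℝ) = (2:ℕ) + 1), Real.Gamma_nat_eq_factorial]
      norm_num
    have e2 : (∫ x in Set.Ioi (0:ℝ), x ^ 2 / 4 * Real.exp (-x))
        = 1/4 * ∫ x in Set.Ioi (0:ℝ), x ^ ((3:ℝ) - 1) * Real.exp (-(1*x)) := by
      rw [← integral_const_mul]
      refine setIntegral_congr_fun measurableSet_Ioi fun x hx => ?_
      have hx2 : x ^ ((3:ℝ) - 1) = x ^ (2:ℕ) := by
        rw [(by norm_num : (3:ℝ) - 1 = ((2:ℕ):ℝ)), Real.rpow_natCast]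
      rw [hx2, one_mul]
      ring
    rw [e1, e2, e3, hGamma]
    norm_num
  -- part 1
  have part1 : ∀ t ∈ Set.Ico (0:ℝ) 1, z t = 1 / (2 * (1 - t) ^ 2) := by
    intro t ht
    have h1t : (0:ℝ) < 1 - t := by linarith [ht.2]
    have hcont : ContinuousOn w (Set.Icc 0 t) := by
      intro y hy
      have hy' : y ∈ Set.Ico (0:ℝ) 1 := ⟨hy.1, lt_of_le_of_lt hy.2 ht.2⟩
      exact ((hwd y hy').continuousWithinAt).mono
        (fun s hs => ⟨hs.1, lt_of_le_of_lt hs.2 ht.2⟩)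
    have hderiv : ∀ y ∈ Set.Ico (0:ℝ) t, HasDerivWithinAt w 0 (Set.Ici y) y := by
      intro y hy
      have hy' : y ∈ Set.Ico (0:ℝ) 1 := ⟨hy.1, lt_trans hy.2 ht.2⟩
      refine (hwd y hy').mono_of_mem_nhdsWithin ?_
      rw [mem_nhdsWithin]
      exact ⟨Set.Iio 1, isOpen_Iio, hy'.2, fun s hs => ⟨le_trans hy.1 hs.2, hs.1⟩⟩
    have hwt := constant_of_has_deriv_right_zero hcont hderiv t (Set.right_mem_Icc.mpr ht.1)
    have hw0 : w 0 = 1/2 := by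
      show (1 - (0:ℝ)) ^ 2 * z 0 = 1/2
      rw [hz0]; norm_num
    have hkey : (1 - t) ^ 2 * z t = 1/2 := by
      have : w t = 1/2 := hwt.trans hw0
      exact this
    rw [_root_.eq_div_iff (by positivity)]
    linarith [hkey]
  intro t ht
  refine ⟨part1 t ht, ?_⟩
  have h1t : (0:ℝ) < 1 - t := by linarith [ht.2]
  have hcongr : (∫ s in (0:ℝ)..t, z s) = ∫ s in (0:ℝ)..t, 1 / (2 * (1 - s) ^ 2) := by
    apply intervalIntegral.integral_congr
    intro s hs
    rw [Set.uIcc_of_le ht.1] at hs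
    exact part1 s ⟨hs.1, lt_of_le_of_lt hs.2 ht.2⟩
  rw [hcongr]
  have hder : ∀ s ∈ Set.uIcc (0:ℝ) t, HasDerivAt (fun y => 1 / (2 * (1 - y)))
      (1 / (2 * (1 - s) ^ 2)) s := by
    intro s hs
    rw [Set.uIcc_of_le ht.1] at hs
    have hs1 : s < 1 := lt_of_le_of_lt hs.2 ht.2
    have hne : 2 * (1 - s) ≠ 0 := ne_of_gt (by linarith)
    have h : HasDerivAt (fun y : ℝ => 2 * (1 - y)) (-2) s := by
      simpa using ((hasDerivAt_id s).const_sub 1).const_mul 2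
    have h2 := h.inv hne
    have h3 : HasDerivAt (fun y : ℝ => 1 / (2 * (1 - y))) (-(-2) / (2 * (1 - s)) ^ 2) s := by
      rw [show (fun y : ℝ => 1 / (2 * (1 - y))) = (fun y => 2 * (1 - y))⁻¹ from
        funext fun y => one_div _]
      exact h2
    have hne2 : (1:ℝ) - s ≠ 0 := ne_of_gt (by linarith)
    convert h3 using 1
    field_simp
  have hic : IntervalIntegrable (fun s => 1 / (2 * (1 - s) ^ 2)) volume 0 t := by
    apply ContinuousOn.intervalIntegrable
    intro s hs
    rw [Set.uIcc_of_le ht.1] at hs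
    have hs1 : s < 1 := lt_of_le_of_lt hs.2 ht.2
    have hc : ContinuousAt (fun y : ℝ => 2 * (1 - y) ^ 2) s := by fun_prop
    have hne : 2 * (1 - s) ^ 2 ≠ 0 := ne_of_gt (by nlinarith)
    exact (continuousAt_const.div hc hne).continuousWithinAt
  rw [intervalIntegral.integral_eq_sub_of_hasDerivAt hder hic]
  have h1t' : (1:ℝ) - t ≠ 0 := ne_of_gt h1t
  field_simp
  ring
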